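/- arXiv:0802.1954 — 2 statements merged into one kernel-verified Lean document; each statement's English description precedes it below -/
import Mathlib

section
/- The reduction algorithm terminates: iteratively replacing the ≤-highest principal derivative u^j_K appearing in an expression by D_L P^α (where (j,K) = (i^α, J^α L)) produces, after finitely many steps, an expression involving only parametric derivatives, provided each P^α depends only on derivatives u^j_K with (j,K) < (i^α, J^α). -/
open MvPolynomial

/-- Jet variables: the independent variables `x i` and the derivatives `u^α_K`. -/
abbrev JetVar (p q : ℕ) := Sum (Fin p) (Fin q × (Fin p →₀ ℕ))

/-- The ring `A` of differential (polynomial) functions on the jet manifold. -/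
abbrev JetRing (p q : ℕ) := MvPolynomial (JetVar p q) ℚ

/-- The total differential operator `D_i = ∂/∂x_i + Σ_{α,K} u^α_{Ki} ∂/∂u^α_K`. -/
noncomputable def totalD (p q : ℕ) (i : Fin p) :
    Derivation ℚ (JetRing p q) (JetRing p q) :=
  MvPolynomial.mkDerivation ℚ (fun v => match v with
    | Sum.inl j => if i = j then 1 else 0
    | Sum.inr (α, K) => X (Sum.inr (α, K + Finsupp.single i 1)))

/-- The multi total differential operator `D_K = D_1^{K_1} ∘ ⋯ ∘ D_p^{K_p}`. -/
noncomputable def DmultiK (p q : ℕ) (K : Fin p →₀ ℕ) :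
    Module.End ℚ (JetRing p q) :=
  (List.finRange p).foldr (fun i f => ((totalD p q i).toLinearMap ^ (K i)) * f) 1

/-- A system of PDEs `u^{i^α}_{J^α} = P^α` together with a ranking `rk` on
`ℕ_q × ℕ^p`: a total order which is positive and compatible with addition,
and with all `J^α ≠ 0`. -/
structure OrthoSystem (p q n : ℕ) where
  ii : Fin n → Fin q
  JJ : Fin n → (Fin p →₀ ℕ)
  P : Fin n → JetRing p q
  rk : (Fin q × (Fin p →₀ ℕ)) → (Fin q × (Fin p →₀ ℕ)) → Prop
  rk_refl : ∀ a, rk a a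
  rk_total : ∀ a b, rk a b ∨ rk b a
  rk_antisymm : ∀ a b, rk a b → rk b a → a = b
  rk_trans : ∀ a b c, rk a b → rk b c → rk a c
  rk_pos : ∀ (j : Fin q) (K L : Fin p →₀ ℕ), rk (j, K) (j, K + L)
  rk_compat : ∀ (i j : Fin q) (J K L : Fin p →₀ ℕ),
    rk (i, J) (j, K) ↔ rk (i, J + L) (j, K + L)
  J_ne : ∀ α, JJ α ≠ 0

variable {p q n : ℕ}

/-- The strict part of the ranking. -/
def OrthoSystem.rlt (S : OrthoSystem p q n) (a b : Fin q × (Fin p →₀ ℕ)) : Prop :=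
  S.rk a b ∧ a ≠ b

/-- A derivative `u^j_K` is principal if `(j,K) = (i^α, J^α L)` for some `α, L`. -/
def OrthoSystem.principal (S : OrthoSystem p q n) (v : Fin q × (Fin p →₀ ℕ)) : Prop :=
  ∃ (α : Fin n) (L : Fin p →₀ ℕ), v = (S.ii α, S.JJ α + L)

/-- `Q` belongs to the subring `B` of functions of parametric derivatives only. -/
def OrthoSystem.inB (S : OrthoSystem p q n) (Q : JetRing p q) : Prop :=
  ∀ (jK : Fin q × (Fin p →₀ ℕ)), Sum.inr jK ∈ Q.vars → ¬ S.principal jK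

/-- Orthonomy: `P^α` depends only on parametric derivatives `u^j_K` with
`(j,K) < (i^α, J^α)`. -/
def OrthoSystem.orthonomic (S : OrthoSystem p q n) : Prop :=
  ∀ (α : Fin n) (jK : Fin q × (Fin p →₀ ℕ)), Sum.inr jK ∈ (S.P α).vars →
    ¬ S.principal jK ∧ S.rlt jK (S.ii α, S.JJ α)

/-- Passivity: `(i^α, J^α K) = (i^β, J^β L)` implies `D_K P^α = D_L P^β`. -/
def OrthoSystem.passive (S : OrthoSystem p q n) : Prop :=
  ∀ (α β : Fin n) (K L : Fin p →₀ ℕ),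
    (S.ii α, S.JJ α + K) = (S.ii β, S.JJ β + L) →
    DmultiK p q K (S.P α) = DmultiK p q L (S.P β)

/-- The differential ideal generated by the `Δ^α = u^{i^α}_{J^α} − P^α`. -/
noncomputable def OrthoSystem.diffIdeal (S : OrthoSystem p q n) : Ideal (JetRing p q) :=
  Ideal.span { x | ∃ (α : Fin n) (L : Fin p →₀ ℕ),
    x = DmultiK p q L (X (Sum.inr (S.ii α, S.JJ α)) - S.P α) }

open Classical in
/-- The reduction `Q ↦ Q̃`: the element of `B` congruent to `Q` modulo the
differential ideal generated by `Δ` (when it exists). -/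
noncomputable def OrthoSystem.red (S : OrthoSystem p q n) (Q : JetRing p q) :
    JetRing p q :=
  if h : ∃ R, S.inB R ∧ Q - R ∈ S.diffIdeal then h.choose else 0

/-- The intrinsic multi-differential operator `𝔇_K P = (D_K P)~`. -/
noncomputable def OrthoSystem.dfrakK (S : OrthoSystem p q n) (K : Fin p →₀ ℕ)
    (Q : JetRing p q) : JetRing p q :=
  S.red (DmultiK p q K Q)

/-- The intrinsic total differential operator `𝔇_j P = (D_j P)~`. -/
noncomputable def OrthoSystem.dfrak (S : OrthoSystem p q n) (j : Fin p)
    (Q : JetRing p q) : JetRing p q :=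
  S.red (totalD p q j Q)

open Classical in
/-- The intrinsic prolongation `𝔭𝔯_Q = Σ_{(j,K)∈S} (𝔇_K Q^j) ∂/∂u^j_K`. -/
noncomputable def OrthoSystem.iprolong (S : OrthoSystem p q n)
    (Q : Fin q → JetRing p q) : Derivation ℚ (JetRing p q) (JetRing p q) :=
  MvPolynomial.mkDerivation ℚ (fun v => match v with
    | Sum.inl _ => 0
    | Sum.inr (j, K) => if S.principal (j, K) then 0 else S.dfrakK K (Q j))

open Classical in
/-- One step of the reduction algorithm: substitute the `≤`-highest principal
derivative `u^j_K = u^{i^α}_{J^α L}` appearing in `Q` by `D_L P^α`. -/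
noncomputable def OrthoSystem.stepRed (S : OrthoSystem p q n) (Q : JetRing p q) :
    JetRing p q :=
  if h : ∃ jK : Fin q × (Fin p →₀ ℕ), Sum.inr jK ∈ Q.vars ∧ S.principal jK ∧
      ∀ jK' : Fin q × (Fin p →₀ ℕ), Sum.inr jK' ∈ Q.vars → S.principal jK' →
        S.rk jK' jK then
    MvPolynomial.aeval
      (fun v => if v = Sum.inr h.choose then
          DmultiK p q h.choose_spec.2.1.choose_spec.choose
            (S.P h.choose_spec.2.1.choose)
        else X v) Q
  else Q

/-!
Total differentiation raises ranks compatibly: if every derivative in `Q` is below `(j, J)`, every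
derivative in `D_L Q` is below `(j, J + L)`. Hence `D_L P^α` involves only derivatives strictly below
`(i^α, J^α + L)`, and one reduction step replaces the highest principal derivative of `Q` by strictly
lower ones. By Dickson's lemma the ranking is a well-order, so this cannot go on forever.
-/

theorem Finset.exists_forall_rel_of_total {α : Type*} {r : α → α → Prop} [Std.Total r]
    [IsTrans α r] {s : Finset α} (hs : s.Nonempty) : ∃ m ∈ s, ∀ x ∈ s, r x m := by
  induction hs using Finset.Nonempty.cons_induction with
  | singleton a =>
    refine ⟨a, mem_singleton_self a, fun x hx => ?_⟩
    rw [mem_singleton.1 hx]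
    exact refl_of r a
  | cons a s _ _ ih =>
    obtain ⟨m, hm, hmax⟩ := ih
    rcases total_of r a m with ham | hma
    · refine ⟨m, mem_cons_of_mem hm, fun x hx => ?_⟩
      rcases mem_cons.1 hx with rfl | hx
      exacts [ham, hmax x hx]
    · refine ⟨a, mem_cons_self a s, fun x hx => ?_⟩
      rcases mem_cons.1 hx with rfl | hx
      exacts [refl_of r x, _root_.trans (hmax x hx) hma]

theorem MvPolynomial.derivation_mapsTo_supported {σ R : Type*} [CommRing R]
    (D : Derivation R (MvPolynomial σ R) (MvPolynomial σ R)) {s t : Set σ} (hst : s ⊆ t)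
    (hD : ∀ i ∈ s, D (X i) ∈ supported R t) : Set.MapsTo D (supported R s) (supported R t) := by
  intro x hx
  rw [supported_eq_adjoin_X] at hx
  induction hx using Algebra.adjoin_induction with
  | mem x hx =>
    obtain ⟨i, hi, rfl⟩ := hx
    exact hD i hi
  | algebraMap r => simp
  | add x y _ _ hx hy => simpa using add_mem hx hy
  | mul x y hx' hy' hx hy =>
    rw [← supported_eq_adjoin_X] at hx' hy'
    rw [D.leibniz, smul_eq_mul, smul_eq_mul]
    exact add_mem (mul_mem (supported_mono hst hx') hy) (mul_mem (supported_mono hst hy') hx)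

namespace OrthoSystem

variable (S : OrthoSystem p q n)

instance : IsPreorder (Fin q × (Fin p →₀ ℕ)) S.rk where
  refl := S.rk_refl
  trans := S.rk_trans

instance : Std.Total S.rk := ⟨S.rk_total⟩

theorem wellQuasiOrdered_rk : WellQuasiOrdered S.rk := fun f => by
  obtain ⟨m, k, hmk, hfst, hsnd⟩ :=
    (Finite.wellQuasiOrdered (· = ·)).prod wellQuasiOrdered_le f
  obtain ⟨L, hL⟩ := exists_add_of_le hsnd
  have hfk : f k = ((f m).1, (f m).2 + L) := Prod.ext hfst.symm hL
  exact ⟨m, k, hmk, hfk ▸ S.rk_pos _ _ L⟩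

theorem wellFounded_rlt : WellFounded S.rlt :=
  Subrelation.wf (fun h => ⟨h.1, fun h' => h.2 (S.rk_antisymm _ _ h.1 h')⟩)
    S.wellQuasiOrdered_rk.wellFounded

variable {S}

theorem rlt_of_rlt_of_rk {a b c : Fin q × (Fin p →₀ ℕ)} (hab : S.rlt a b) (hbc : S.rk b c) :
    S.rlt a c :=
  ⟨S.rk_trans _ _ _ hab.1 hbc, by rintro rfl; exact hab.2 (S.rk_antisymm _ _ hab.1 hbc)⟩

theorem rlt_add_right {i j : Fin q} {J K : Fin p →₀ ℕ} (h : S.rlt (i, J) (j, K))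
    (L : Fin p →₀ ℕ) : S.rlt (i, J + L) (j, K + L) :=
  ⟨(S.rk_compat _ _ _ _ _).1 h.1, fun he => h.2 (by simpa using he)⟩

variable (S)

def varsBelow (b : Fin q × (Fin p →₀ ℕ)) : Set (JetVar p q) :=
  {v | ∀ a, v = Sum.inr a → S.rlt a b}

def RaisesBy (f : Module.End ℚ (JetRing p q)) (L : Fin p →₀ ℕ) : Prop :=
  ∀ j J, Set.MapsTo f (supported ℚ (S.varsBelow (j, J))) (supported ℚ (S.varsBelow (j, J + L)))

variable {S}

theorem raisesBy_one : S.RaisesBy 1 0 :=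
  fun _ _ _ hx => by simpa using hx

theorem RaisesBy.mul {f g : Module.End ℚ (JetRing p q)} {L M : Fin p →₀ ℕ}
    (hf : S.RaisesBy f L) (hg : S.RaisesBy g M) : S.RaisesBy (f * g) (L + M) := by
  intro j J
  rw [add_comm L, ← add_assoc]
  exact (hf j (J + M)).comp (hg j J)

theorem RaisesBy.pow {f : Module.End ℚ (JetRing p q)} {L : Fin p →₀ ℕ} (hf : S.RaisesBy f L)
    (k : ℕ) : S.RaisesBy (f ^ k) (k • L) := by
  induction k with
  | zero => simpa using raisesBy_one
  | succ k ih => simpa [pow_succ', succ_nsmul'] using hf.mul ih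

variable (S)

theorem raisesBy_totalD (i : Fin p) :
    S.RaisesBy (totalD p q i).toLinearMap (Finsupp.single i 1) := by
  intro j J
  refine derivation_mapsTo_supported _
    (fun v hv a ha => rlt_of_rlt_of_rk (hv a ha) (S.rk_pos _ _ _)) fun v hv => ?_
  rcases v with k | ⟨a, K⟩
  · simp only [totalD, mkDerivation_X]
    split_ifs
    exacts [one_mem _, zero_mem _]
  · simp only [totalD, mkDerivation_X]
    refine X_mem_supported.2 fun b hb => ?_
    rw [← Sum.inr_injective hb]
    exact rlt_add_right (hv _ rfl) _

theorem raisesBy_DmultiK (K : Fin p →₀ ℕ) : S.RaisesBy (DmultiK p q K) K := by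
  have hfold : ∀ l : List (Fin p),
      S.RaisesBy (l.foldr (fun i f => ((totalD p q i).toLinearMap ^ (K i)) * f) 1)
        (l.map fun i => Finsupp.single i (K i)).sum := by
    intro l
    induction l with
    | nil => exact raisesBy_one
    | cons i l ih => simpa using ((S.raisesBy_totalD i).pow (K i)).mul ih
  have hK : ((List.finRange p).map fun i => Finsupp.single i (K i)).sum = K := by
    rw [← Fin.sum_univ_def, Finsupp.univ_sum_single]
  simpa only [DmultiK, hK] using hfold (List.finRange p)

theorem P_mem_supported (hS : S.orthonomic) (α : Fin n) :
    S.P α ∈ supported ℚ (S.varsBelow (S.ii α, S.JJ α)) :=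
  mem_supported.2 fun _ hv a ha => (hS α a (ha ▸ hv)).2

def PrincipalBelow (b : Fin q × (Fin p →₀ ℕ)) (Q : JetRing p q) : Prop :=
  ∀ a, Sum.inr a ∈ Q.vars → S.principal a → S.rlt a b

theorem exists_highest_principal {Q : JetRing p q} (hQ : ¬ S.inB Q) :
    ∃ t, Sum.inr t ∈ Q.vars ∧ S.principal t ∧
      ∀ t', Sum.inr t' ∈ Q.vars → S.principal t' → S.rk t' t := by
  classical
  simp only [inB, not_forall, not_not] at hQ
  obtain ⟨a, ha, hpa⟩ := hQ
  let s := (Q.vars.preimage Sum.inr Sum.inr_injective.injOn).filter S.principal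
  obtain ⟨t, hts, htop⟩ := Finset.exists_forall_rel_of_total (r := S.rk) (s := s)
    ⟨a, by simpa [s] using ⟨ha, hpa⟩⟩
  simp only [s, Finset.mem_filter, Finset.mem_preimage] at hts htop
  exact ⟨t, hts.1, hts.2, fun t' h h' => htop t' ⟨h, h'⟩⟩

theorem exists_principalBelow_stepRed (hS : S.orthonomic) {Q : JetRing p q} (hQ : ¬ S.inB Q) :
    ∃ t, Sum.inr t ∈ Q.vars ∧ S.principal t ∧ S.PrincipalBelow t (S.stepRed Q) := by
  have h := S.exists_highest_principal hQ
  obtain ⟨htQ, hpt, htop⟩ := h.choose_spec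
  refine ⟨h.choose, htQ, hpt, fun a ha hpa => ?_⟩
  rw [stepRed, dif_pos h, aeval_eq_bind₁] at ha
  obtain ⟨w, hw, haw⟩ := mem_vars_bind₁ _ _ ha
  split_ifs at haw with hwt
  · rw [hpt.choose_spec.choose_spec]
    exact mem_supported.1 (S.raisesBy_DmultiK _ _ _ (S.P_mem_supported hS _)) haw a rfl
  · rw [vars_X, Finset.mem_singleton] at haw
    subst haw
    exact ⟨htop a hw hpa, fun h => hwt (congrArg Sum.inr h)⟩

theorem exists_iterate_inB_of_principalBelow (hS : S.orthonomic) (b : Fin q × (Fin p →₀ ℕ)) :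
    ∀ Q, S.PrincipalBelow b Q → ∃ m : ℕ, S.inB (S.stepRed^[m] Q) := by
  induction b using S.wellFounded_rlt.induction with
  | _ b ih =>
    intro Q hQ
    by_cases hB : S.inB Q
    · exact ⟨0, hB⟩
    obtain ⟨t, htQ, hpt, hstep⟩ := S.exists_principalBelow_stepRed hS hB
    obtain ⟨m, hm⟩ := ih t (hQ t htQ hpt) _ hstep
    exact ⟨m + 1, hm⟩

end OrthoSystem

/-- The reduction algorithm terminates: iterating the substitution step on any
expression `Q` produces, after finitely many steps, an expression involving only
parametric derivatives, provided each `P^α` depends only on derivatives `u^j_K`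
with `(j,K) < (i^α, J^α)`. -/
theorem reduction_terminates (S : OrthoSystem p q n)
    (hS : S.orthonomic) (Q : JetRing p q) :
    ∃ m : ℕ, S.inB ((S.stepRed)^[m] Q) := by
  by_cases hB : S.inB Q
  · exact ⟨0, hB⟩
  obtain ⟨t, -, -, hstep⟩ := S.exists_principalBelow_stepRed hS hB
  obtain ⟨m, hm⟩ := S.exists_iterate_inB_of_principalBelow hS t _ hstep
  exact ⟨m + 1, hm⟩
end

section
/- For the Boussinesq equation u_tt = u_xxxx − 2 u_x u_xx, the tuple Q = u_txx − u_t u_x is a generalized symmetry: 𝔇_t² Q − 𝔭𝔯_Q P = 0, where P = u_xxxx − 2 u_x u_xx. -/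
open MvPolynomial

/-- The ring of functions of the parametric derivatives of the Boussinesq
equation `u_tt = u_xxxx − 2 u_x u_xx`: the variable `(false, n)` stands for
`u_{x^n}` and `(true, n)` stands for `u_{t x^n}`. -/
abbrev BqRing := MvPolynomial (Bool × ℕ) ℚ

/-- The intrinsic total `x`-derivative `𝔇_x` on parametric variables. -/
noncomputable def Dx : Derivation ℚ BqRing BqRing :=
  MvPolynomial.mkDerivation ℚ (fun v => X (v.1, v.2 + 1))

/-- The right hand side `P = u_xxxx − 2 u_x u_xx` of the Boussinesq equation. -/
noncomputable def Pbq : BqRing :=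
  X (false, 4) - 2 * X (false, 1) * X (false, 2)

/-- The intrinsic total `t`-derivative
`𝔇_t = ∂/∂t + Σ_n u_{tx^n} ∂/∂u_{x^n} + Σ_n (𝔇_x^n P) ∂/∂u_{tx^n}`. -/
noncomputable def Dt : Derivation ℚ BqRing BqRing :=
  MvPolynomial.mkDerivation ℚ (fun v => match v with
    | (false, m) => X (true, m)
    | (true, m) => (Dx.toLinearMap ^ m) Pbq)

/-- The candidate symmetry `Q = u_txx − u_t u_x`. -/
noncomputable def Qbq : BqRing :=
  X (true, 2) - X (true, 0) * X (false, 1)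

/-- The intrinsic prolongation
`𝔭𝔯_Q = Σ_n (𝔇_x^n Q) ∂/∂u_{x^n} + Σ_n (𝔇_t 𝔇_x^n Q) ∂/∂u_{tx^n}`. -/
noncomputable def prQbq : Derivation ℚ BqRing BqRing :=
  MvPolynomial.mkDerivation ℚ (fun v => match v with
    | (false, m) => (Dx.toLinearMap ^ m) Qbq
    | (true, m) => Dt ((Dx.toLinearMap ^ m) Qbq))

theorem Derivation.map_ofNat {R A M : Type*} [CommSemiring R] [CommSemiring A] [AddCommMonoid M]
    [Algebra R A] [Module A M] [Module R M] (D : Derivation R A M) (n : ℕ) [n.AtLeastTwo] :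
    D (no_index (OfNat.ofNat n : A)) = 0 := by
  rw [← Nat.cast_ofNat, D.map_natCast]

lemma Dx_X (b : Bool) (m : ℕ) : Dx (X (b, m)) = X (b, m + 1) :=
  mkDerivation_X _ _ _

lemma Dx_pow_succ_apply (n : ℕ) (p : BqRing) :
    (Dx.toLinearMap ^ (n + 1)) p = Dx ((Dx.toLinearMap ^ n) p) := by
  rw [pow_succ', Module.End.mul_apply]
  rfl

lemma Dt_X_false (m : ℕ) : Dt (X (false, m)) = X (true, m) :=
  mkDerivation_X _ _ _

lemma Dt_X_true (m : ℕ) : Dt (X (true, m)) = (Dx.toLinearMap ^ m) Pbq :=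
  mkDerivation_X _ _ _

lemma prQbq_X_false (m : ℕ) : prQbq (X (false, m)) = (Dx.toLinearMap ^ m) Qbq :=
  mkDerivation_X _ _ _

section Expansion

local notation "u" n => (X (false, n) : BqRing)
local notation "v" n => (X (true, n) : BqRing)

lemma Dt_Dt_Qbq : Dt (Dt Qbq) = (v 6) - (v 0) * (u 5) - 4 * (v 1) * (u 4) - 6 * (v 2) * (u 3)
    - 6 * (v 3) * (u 2) - 3 * (v 4) * (u 1) + 6 * (v 1) * (u 1) * (u 2) + 2 * (v 0) * (u 2) ^ 2
    + 2 * (v 0) * (u 1) * (u 3) + 2 * (v 2) * (u 1) ^ 2 := by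
  simp only [Qbq, Pbq, map_zero, map_add, map_sub, Derivation.leibniz, smul_eq_mul,
    Derivation.map_ofNat, Dt_X_false, Dt_X_true, Dx_pow_succ_apply, pow_zero,
    Module.End.one_apply, Dx_X, Nat.reduceAdd]
  ring

lemma prQbq_Pbq : prQbq Pbq = (v 6) - (v 0) * (u 5) - 4 * (v 1) * (u 4) - 6 * (v 2) * (u 3)
    - 6 * (v 3) * (u 2) - 3 * (v 4) * (u 1) + 6 * (v 1) * (u 1) * (u 2) + 2 * (v 0) * (u 2) ^ 2
    + 2 * (v 0) * (u 1) * (u 3) + 2 * (v 2) * (u 1) ^ 2 := by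
  simp only [Qbq, Pbq, map_add, map_sub, Derivation.leibniz, smul_eq_mul,
    Derivation.map_ofNat, prQbq_X_false, Dx_pow_succ_apply, pow_zero, Module.End.one_apply,
    Dx_X, Nat.reduceAdd]
  ring

end Expansion

/-- For the Boussinesq equation `u_tt = u_xxxx − 2 u_x u_xx`, the tuple
`Q = u_txx − u_t u_x` is a generalized symmetry: `𝔇_t² Q − 𝔭𝔯_Q P = 0`. -/
theorem boussinesq_symmetry : Dt (Dt Qbq) - prQbq Pbq = 0 := by
  rw [Dt_Dt_Qbq, prQbq_Pbq, sub_self]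
end
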